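/- Let σ > 0, σ_0 > 0, σ_1 > 0 and h ≥ 0. For a = 0,1 define Δ_a(n) = σ_a² / ((σ_a²/σ² + n)(σ_a²/σ² + 1 + n)) for n ∈ ℕ. Let (Ω, 𝓖, μ) be a probability space with a filtration (𝓕_t)_{t≥1} and let (A_t)_{t≥1} be {0,1}-valued random variables with A_t measurable with respect to 𝓕_t. Let N_a(t) = #{s ≤ t : A_s = a} be the number of the first t assignments to arm a, and assume that for every t ≥ 1, P(A_{t+1} = 0 | 𝓕_t) = Δ_0(N_0(t))^h / (Δ_0(N_0(t))^h + Δ_1(N_1(t))^h) almost surely. Then, almost surely, N_0(t)/t → σ_0^{2h/(1+2h)} / (σ_0^{2h/(1+2h)} + σ_1^{2h/(1+2h)}) as t → ∞. -/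

import Mathlib

/-!
Write `x t = N₀(t) / t`, `p t` for the conditional probability that patient `t + 1` goes to arm `0`
and `ξ (t + 1)` for the indicator of that event, so that
`x (t + 1) = x t + (p t - x t) / (t + 1) + (ξ (t + 1) - p t) / (t + 1)`.
The noise terms are martingale differences with square-summable weights, hence their partial sums
form an `L²`-bounded martingale, which converges almost surely. Since `Δₐ(n) ≍ σₐ² / n²`, for large
`t` the drift `p t - x t` is negative when `x t ≥ L + ε` and positive when `x t ≤ L - ε`, where `L`
solves `L / (1 - L) = (σ₀ / σ₁) ^ (2h / (1 + 2h))`. A deterministic Robbins–Monro argument along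
each path on which the noise converges then yields `x t → L`.
-/

open MeasureTheory Filter

/-- The expected one-step information gain of an arm with sampling variance `σa²`
after `n` observations, under a `N(0, σ²)` prior:
`Δ(n) = σa² / ((σa²/σ² + n) (σa²/σ² + 1 + n))`. -/
noncomputable def budGain (σ σa : ℝ) (n : ℕ) : ℝ :=
  σa ^ 2 / ((σa ^ 2 / σ ^ 2 + n) * (σa ^ 2 / σ ^ 2 + 1 + n))

open Finset Topology

noncomputable def budProb (σ σ₀ σ₁ h : ℝ) (n m : ℕ) : ℝ :=
  budGain σ σ₀ n ^ h / (budGain σ σ₀ n ^ h + budGain σ σ₁ m ^ h)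

noncomputable def budLimit (σ₀ σ₁ h : ℝ) : ℝ :=
  σ₀ ^ (2 * h / (1 + 2 * h)) / (σ₀ ^ (2 * h / (1 + 2 * h)) + σ₁ ^ (2 * h / (1 + 2 * h)))

section BudGain

variable {σ σa h : ℝ}

lemma budGain_pos (hσ : 0 < σ) (hσa : 0 < σa) (n : ℕ) : 0 < budGain σ σa n := by
  unfold budGain
  positivity

lemma budGain_nonneg (σ σa : ℝ) (n : ℕ) : 0 ≤ budGain σ σa n := by
  unfold budGain
  positivity

lemma budGain_le {n : ℕ} (hn : 0 < n) : budGain σ σa n ≤ σa ^ 2 / (n : ℝ) ^ 2 := by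
  have hk : 0 ≤ σa ^ 2 / σ ^ 2 := by positivity
  have hn' : (0 : ℝ) < n := by exact_mod_cast hn
  unfold budGain
  gcongr
  nlinarith

lemma sq_div_le_budGain (hσ : 0 < σ) (hσa : 0 < σa) (n : ℕ) :
    σa ^ 2 / (n + (σa ^ 2 / σ ^ 2 + 1)) ^ 2 ≤ budGain σ σa n := by
  have hk : 0 < σa ^ 2 / σ ^ 2 := by positivity
  unfold budGain
  gcongr
  nlinarith

lemma div_rpow_two_mul_eq_sq_div_sq_rpow {x y : ℝ} (hx : 0 ≤ x) (hy : 0 ≤ y) :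
    (x / y) ^ (2 * h) = (x ^ 2 / y ^ 2) ^ h := by
  rw [← div_pow, ← Real.rpow_two, ← Real.rpow_mul (div_nonneg hx hy)]

lemma budGain_rpow_le (hσa : 0 < σa) (hh : 0 ≤ h) {n : ℕ} (hn : 0 < n) :
    budGain σ σa n ^ h ≤ (σa / n) ^ (2 * h) := by
  rw [div_rpow_two_mul_eq_sq_div_sq_rpow hσa.le n.cast_nonneg]
  exact Real.rpow_le_rpow (budGain_nonneg σ σa n) (budGain_le hn) hh

lemma budGain_rpow_ge (hσ : 0 < σ) (hσa : 0 < σa) (hh : 0 ≤ h) (n : ℕ) :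
    (σa / (n + (σa ^ 2 / σ ^ 2 + 1))) ^ (2 * h) ≤ budGain σ σa n ^ h := by
  rw [div_rpow_two_mul_eq_sq_div_sq_rpow hσa.le (by positivity)]
  exact Real.rpow_le_rpow (by positivity) (sq_div_le_budGain hσ hσa n) hh

/-- The exponent `r = 2h / (1 + 2h)` of the limit is the one with `2h = r + r·2h`; this splitting
reduces comparing `(σ₀ / n) ^ (2h)` with `(σ₁ / m) ^ (2h)` to comparing `σ₀ ^ r / n` with
`σ₁ ^ r / m`. -/
lemma div_rpow_two_mul_eq_rpow_mul_div_rpow (hh : 0 ≤ h) {x y : ℝ} (hx : 0 < x) (hy : 0 ≤ y) :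
    (x / y) ^ (2 * h) = x ^ (2 * h / (1 + 2 * h)) * (x ^ (2 * h / (1 + 2 * h)) / y) ^ (2 * h) := by
  have hexp : 2 * h = 2 * h / (1 + 2 * h) + 2 * h / (1 + 2 * h) * (2 * h) := by
    field_simp
  rw [Real.div_rpow hx.le hy, Real.div_rpow (by positivity) hy, ← Real.rpow_mul hx.le,
    mul_div_assoc', ← Real.rpow_add hx, ← hexp]

end BudGain

section BudProb

lemma budProb_mem_Icc (σ σ₀ σ₁ h : ℝ) (n m : ℕ) : budProb σ σ₀ σ₁ h n m ∈ Set.Icc 0 1 := by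
  have ha := Real.rpow_nonneg (budGain_nonneg σ σ₀ n) h
  have hb := Real.rpow_nonneg (budGain_nonneg σ σ₁ m) h
  exact ⟨by unfold budProb; positivity,
    div_le_one_of_le₀ (le_add_of_nonneg_right hb) (by positivity)⟩

variable {σ σ₀ σ₁ h : ℝ}

lemma budProb_swap (hσ : 0 < σ) (hσ₀ : 0 < σ₀) (hσ₁ : 0 < σ₁) (n m : ℕ) :
    budProb σ σ₁ σ₀ h m n = 1 - budProb σ σ₀ σ₁ h n m := by
  have ha := Real.rpow_pos_of_pos (budGain_pos hσ hσ₀ n) h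
  have hb := Real.rpow_pos_of_pos (budGain_pos hσ hσ₁ m) h
  unfold budProb
  field_simp
  ring

lemma budLimit_swap (hσ₀ : 0 < σ₀) (hσ₁ : 0 < σ₁) : budLimit σ₁ σ₀ h = 1 - budLimit σ₀ σ₁ h := by
  have ha := Real.rpow_pos_of_pos hσ₀ (2 * h / (1 + 2 * h))
  have hb := Real.rpow_pos_of_pos hσ₁ (2 * h / (1 + 2 * h))
  unfold budLimit
  field_simp
  ring

lemma budProb_le_budLimit (hσ : 0 < σ) (hσ₀ : 0 < σ₀) (hσ₁ : 0 < σ₁) (hh : 0 ≤ h) {n m : ℕ}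
    (hn : 0 < n)
    (hnm : σ₀ ^ (2 * h / (1 + 2 * h)) * (m + (σ₁ ^ 2 / σ ^ 2 + 1)) ≤
      σ₁ ^ (2 * h / (1 + 2 * h)) * n) :
    budProb σ σ₀ σ₁ h n m ≤ budLimit σ₀ σ₁ h := by
  set A := σ₀ ^ (2 * h / (1 + 2 * h))
  set B := σ₁ ^ (2 * h / (1 + 2 * h))
  set y := (m : ℝ) + (σ₁ ^ 2 / σ ^ 2 + 1)
  have hA : 0 < A := Real.rpow_pos_of_pos hσ₀ _
  have hB : 0 < B := Real.rpow_pos_of_pos hσ₁ _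
  have hn' : (0 : ℝ) < n := by exact_mod_cast hn
  have hy : 0 < y := by positivity
  have ha := Real.rpow_pos_of_pos (budGain_pos hσ hσ₀ n) h
  have hb := Real.rpow_pos_of_pos (budGain_pos hσ hσ₁ m) h
  have hratio : (A / n) ^ (2 * h) ≤ (B / y) ^ (2 * h) :=
    Real.rpow_le_rpow (by positivity) ((div_le_div_iff₀ hn' hy).2 hnm) (by positivity)
  have hcross : budGain σ σ₀ n ^ h * B ≤ A * budGain σ σ₁ m ^ h :=
    calc budGain σ σ₀ n ^ h * B ≤ A * (A / n) ^ (2 * h) * B := by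
          gcongr
          rw [← div_rpow_two_mul_eq_rpow_mul_div_rpow hh hσ₀ hn'.le]
          exact budGain_rpow_le hσ₀ hh hn
      _ ≤ A * (B * (B / y) ^ (2 * h)) := by nlinarith [mul_pos hA hB]
      _ ≤ A * budGain σ σ₁ m ^ h := by
          gcongr
          rw [← div_rpow_two_mul_eq_rpow_mul_div_rpow hh hσ₁ hy.le]
          exact budGain_rpow_ge hσ hσ₁ hh m
  unfold budProb budLimit
  rw [div_le_div_iff₀ (by positivity) (by positivity)]
  linarith

lemma eventually_budProb_le_budLimit (hσ : 0 < σ) (hσ₀ : 0 < σ₀) (hσ₁ : 0 < σ₁) (hh : 0 ≤ h)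
    {ε : ℝ} (hε : 0 < ε) :
    ∀ᶠ t : ℕ in atTop, ∀ n m : ℕ, n + m = t → budLimit σ₀ σ₁ h + ε ≤ n / t →
      budProb σ σ₀ σ₁ h n m ≤ budLimit σ₀ σ₁ h := by
  set A := σ₀ ^ (2 * h / (1 + 2 * h))
  set B := σ₁ ^ (2 * h / (1 + 2 * h))
  set K := σ₁ ^ 2 / σ ^ 2 + 1
  have hA : 0 < A := Real.rpow_pos_of_pos hσ₀ _
  have hB : 0 < B := Real.rpow_pos_of_pos hσ₁ _
  have hL : budLimit σ₀ σ₁ h * (A + B) = A := div_mul_cancel₀ _ (by positivity)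
  have hL0 : 0 < budLimit σ₀ σ₁ h := div_pos hA (by positivity)
  filter_upwards [eventually_gt_atTop 0,
    tendsto_natCast_atTop_atTop.eventually_ge_atTop (A * K / ((A + B) * ε))]
    with t ht htK n m hnm hfrac
  have ht' : (0 : ℝ) < t := by exact_mod_cast ht
  have hnm' : (n : ℝ) + m = t := by exact_mod_cast hnm
  have hn : (budLimit σ₀ σ₁ h + ε) * t ≤ n := (le_div_iff₀ ht').1 hfrac
  have hKt : A * K ≤ (A + B) * ε * t := (div_le_iff₀' (by positivity)).1 htK
  refine budProb_le_budLimit hσ hσ₀ hσ₁ hh ?_ ?_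
  · exact_mod_cast (show (0 : ℝ) < n from lt_of_lt_of_le (by positivity) hn)
  -- `(A + B) n ≥ (A + B) (L + ε) t = A t + (A + B) ε t ≥ A (n + m) + A K`
  · nlinarith

lemma eventually_budLimit_le_budProb (hσ : 0 < σ) (hσ₀ : 0 < σ₀) (hσ₁ : 0 < σ₁) (hh : 0 ≤ h)
    {ε : ℝ} (hε : 0 < ε) :
    ∀ᶠ t : ℕ in atTop, ∀ n m : ℕ, n + m = t → (n : ℝ) / t ≤ budLimit σ₀ σ₁ h - ε →
      budLimit σ₀ σ₁ h ≤ budProb σ σ₀ σ₁ h n m := by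
  filter_upwards [eventually_gt_atTop 0, eventually_budProb_le_budLimit hσ hσ₁ hσ₀ hh hε]
    with t ht hswap n m hnm hfrac
  have ht' : (0 : ℝ) < t := by exact_mod_cast ht
  have hm : (m : ℝ) / t = 1 - n / t := by
    rw [eq_sub_iff_add_eq, ← add_div, ← Nat.cast_add, add_comm, hnm, div_self ht'.ne']
  have := hswap m n (by omega) (by rw [hm, budLimit_swap hσ₀ hσ₁]; linarith)
  rw [budProb_swap hσ hσ₀ hσ₁, budLimit_swap hσ₀ hσ₁] at this
  linarith

end BudProb

section Drift

variable {x p W : ℕ → ℝ} {L ε : ℝ}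

lemma tendsto_atBot_of_le_sub_div {y : ℕ → ℝ} {S : ℕ} (hε : 0 < ε)
    (hy : ∀ t ≥ S, y (t + 1) ≤ y t - ε / (t + 1)) : Tendsto y atTop atBot := by
  set H : ℕ → ℝ := fun T => ∑ i ∈ range T, 1 / ((i : ℝ) + 1)
  have hle : ∀ T ≥ S, y T ≤ y S + ε * H S - ε * H T := by
    refine Nat.le_induction (by ring_nf; rfl) fun T hT ih => ?_
    have := hy T hT
    simp only [H, sum_range_succ, mul_add, mul_one_div] at ih ⊢
    linarith
  have hH : Tendsto (fun T => y S + ε * H S - ε * H T) atTop atBot := by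
    have := Real.tendsto_sum_range_one_div_nat_succ_atTop.const_mul_atTop hε
    simpa only [sub_eq_add_neg, Function.comp_def] using
      tendsto_atBot_add_const_left _ (y S + ε * H S) (tendsto_neg_atTop_atBot.comp this)
  exact tendsto_atBot_mono' atTop (eventually_atTop.2 ⟨S, hle⟩) hH

/-- The upper half of a Robbins–Monro argument: `x t - W t` moves by the drift `(p t - x t)/(t+1)`,
which is `≤ -ε/(t+1)` while `x ≥ L + ε`; harmonic divergence forces `x` below `L + ε`, and the
Cauchy property of `W` keeps it from climbing back far. -/
lemma eventually_le_of_drift (hε : 0 < ε) (hx : ∀ t, 0 ≤ x t) (hp : ∀ t, p t ≤ 1)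
    (hrec : ∀ᶠ t in atTop, x (t + 1) = x t + (p t - x t) / (t + 1) + (W (t + 1) - W t))
    (hdrift : ∀ᶠ t in atTop, L + ε ≤ x t → p t ≤ L) (hW : CauchySeq W) :
    ∀ᶠ t in atTop, x t ≤ L + 4 * ε := by
  obtain ⟨S₀, hS₀⟩ := Metric.cauchySeq_iff.1 hW ε hε
  obtain ⟨S, hS⟩ := eventually_atTop.1 <| hrec.and <| hdrift.and <| (eventually_ge_atTop S₀).and <|
    (tendsto_order.1 tendsto_one_div_add_atTop_nhds_zero_nat).2 ε hε
  have hstep : ∀ t ≥ S, x (t + 1) - W (t + 1) = x t - W t + (p t - x t) / (t + 1) := fun t ht => by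
    rw [(hS t ht).1]; ring
  have hWS : ∀ t ≥ S, |W t - W S| < ε := fun t ht =>
    hS₀ t (hS t ht).2.2.1 S (hS S le_rfl).2.2.1
  obtain ⟨t₀, ht₀S, ht₀⟩ : ∃ t₀ ≥ S, x t₀ < L + ε := by
    by_contra! hcon
    have hdown : Tendsto (fun t => x t - W t) atTop atBot :=
      tendsto_atBot_of_le_sub_div hε (S := S) fun t ht => by
        have hpx : p t - x t ≤ -ε := by linarith [(hS t ht).2.1 (hcon t ht), hcon t ht]
        have : (p t - x t) / (t + 1) ≤ -ε / (t + 1) := by gcongr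
        rw [hstep t ht]
        linarith [neg_div ((t : ℝ) + 1) ε]
    have hbdd : ∀ t ≥ S, -W S - ε < x t - W t := fun t ht => by
      linarith [hx t, (abs_lt.1 (hWS t ht)).2]
    obtain ⟨t, ht, htS⟩ := ((hdown.eventually (eventually_le_atBot (-W S - ε))).and
      (eventually_ge_atTop S)).exists
    exact (hbdd t htS).not_ge ht
  have hinv : ∀ T ≥ t₀, x T - W T ≤ L + 3 * ε - W S := by
    refine Nat.le_induction ?_ fun T hT ih => ?_
    · linarith [(abs_lt.1 (hWS t₀ ht₀S)).1]
    have hTS : T ≥ S := ht₀S.trans hT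
    rw [hstep T hTS]
    by_cases hxT : L + ε ≤ x T
    · have : (p T - x T) / (T + 1) ≤ 0 :=
        div_nonpos_of_nonpos_of_nonneg (by linarith [(hS T hTS).2.1 hxT]) (by positivity)
      linarith
    · have : (p T - x T) / (T + 1) ≤ 1 / (T + 1) := by
        gcongr
        linarith [hp T, hx T]
      linarith [(hS T hTS).2.2.2, (abs_lt.1 (hWS T hTS)).1]
  filter_upwards [eventually_ge_atTop t₀] with T hT
  linarith [hinv T hT, (abs_lt.1 (hWS T (ht₀S.trans hT))).2]

lemma tendsto_of_drift (hx : ∀ t, x t ∈ Set.Icc 0 1) (hp : ∀ t, p t ∈ Set.Icc 0 1)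
    (hrec : ∀ᶠ t in atTop, x (t + 1) = x t + (p t - x t) / (t + 1) + (W (t + 1) - W t))
    (hup : ∀ ε > 0, ∀ᶠ t in atTop, L + ε ≤ x t → p t ≤ L)
    (hlow : ∀ ε > 0, ∀ᶠ t in atTop, x t ≤ L - ε → L ≤ p t) (hW : CauchySeq W) :
    Tendsto x atTop (𝓝 L) := by
  refine tendsto_order.2 ⟨fun a ha => ?_, fun b hb => ?_⟩
  · have hε : 0 < (L - a) / 8 := by linarith
    have hrec' : ∀ᶠ t in atTop, 1 - x (t + 1) =
        1 - x t + ((1 - p t) - (1 - x t)) / (t + 1) + (-W (t + 1) - -W t) :=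
      hrec.mono fun t ht => by rw [ht]; ring
    have hlow' : ∀ᶠ t in atTop, 1 - L + (L - a) / 8 ≤ 1 - x t → 1 - p t ≤ 1 - L :=
      (hlow _ hε).mono fun t ht hxt => by linarith [ht (by linarith)]
    filter_upwards [eventually_le_of_drift hε (fun t => by linarith [(hx t).2])
      (fun t => by linarith [(hp t).1]) hrec' hlow' hW.neg] with t ht
    linarith
  · have hε : 0 < (b - L) / 8 := by linarith
    filter_upwards [eventually_le_of_drift hε (fun t => (hx t).1) (fun t => (hp t).2) hrec
      (hup _ hε) hW] with t ht
    linarith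

end Drift

section MartingaleDifferences

variable {Ω : Type*} {m₀ : MeasurableSpace Ω} {μ : Measure Ω}

lemma integral_mul_eq_zero_of_condExp_eq_zero [IsFiniteMeasure μ] {m : MeasurableSpace Ω}
    (hm : m ≤ m₀) {f g : Ω → ℝ} (hg : StronglyMeasurable[m] g)
    (hgf : Integrable (fun ω => g ω * f ω) μ) (hf : Integrable f μ) (hcond : μ[f|m] =ᵐ[μ] 0) :
    ∫ ω, g ω * f ω ∂μ = 0 := by
  rw [← integral_condExp hm]
  refine (integral_congr_ae ?_).trans (integral_zero Ω ℝ)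
  filter_upwards [condExp_mul_of_stronglyMeasurable_left (μ := μ) hg hgf hf, hcond] with ω h1 h2
  rw [Pi.mul_apply, h2, Pi.zero_apply, mul_zero] at h1
  exact h1

lemma eLpNorm_one_le_of_integral_sq_le [IsProbabilityMeasure μ] {f : Ω → ℝ} (hf : Integrable f μ)
    (hf2 : Integrable (fun ω => f ω ^ 2) μ) {C : ℝ} (hC : ∫ ω, f ω ^ 2 ∂μ ≤ C) :
    eLpNorm f 1 μ ≤ ENNReal.ofReal ((1 + C) / 2) := by
  rw [eLpNorm_one_eq_lintegral_enorm, ← ofReal_integral_norm_eq_lintegral_enorm hf]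
  refine ENNReal.ofReal_le_ofReal ?_
  have hamgm : ∀ ω, ‖f ω‖ ≤ (1 + f ω ^ 2) / 2 := fun ω => by
    rw [Real.norm_eq_abs]
    nlinarith [sq_nonneg (|f ω| - 1), sq_abs (f ω)]
  calc ∫ ω, ‖f ω‖ ∂μ ≤ ∫ ω, (1 + f ω ^ 2) / 2 ∂μ :=
        integral_mono hf.norm (((integrable_const 1).add hf2).div_const 2) hamgm
    _ = (1 + ∫ ω, f ω ^ 2 ∂μ) / 2 := by
        rw [integral_div, integral_add (integrable_const 1) hf2, integral_const]; simp
    _ ≤ (1 + C) / 2 := by linarith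

variable {𝓕 : Filtration ℕ m₀} {D : ℕ → Ω → ℝ} {c : ℕ → ℝ}

lemma stronglyMeasurable_sum_range (hD : ∀ t, StronglyMeasurable[𝓕 (t + 1)] (D t)) (T : ℕ) :
    StronglyMeasurable[𝓕 T] (∑ t ∈ range T, D t) :=
  Finset.stronglyMeasurable_sum _ fun t ht => (hD t).mono (𝓕.mono (mem_range.1 ht))

lemma integrable_of_ae_abs_le [IsFiniteMeasure μ] (hD : ∀ t, StronglyMeasurable[𝓕 (t + 1)] (D t))
    (hDc : ∀ t, ∀ᵐ ω ∂μ, |D t ω| ≤ c t) (t : ℕ) : Integrable (D t) μ :=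
  .of_bound ((hD t).mono (𝓕.le _)).aestronglyMeasurable (c t) (by simpa using hDc t)

lemma ae_abs_sum_range_le (hDc : ∀ t, ∀ᵐ ω ∂μ, |D t ω| ≤ c t) (T : ℕ) :
    ∀ᵐ ω ∂μ, |∑ t ∈ range T, D t ω| ≤ ∑ t ∈ range T, c t := by
  filter_upwards [ae_all_iff.2 hDc] with ω hω
  exact (abs_sum_le_sum_abs _ _).trans (sum_le_sum fun t _ => hω t)

/-- Martingale differences are orthogonal in `L²`. -/
lemma integral_sq_sum_range_le [IsProbabilityMeasure μ]
    (hD : ∀ t, StronglyMeasurable[𝓕 (t + 1)] (D t)) (hDc : ∀ t, ∀ᵐ ω ∂μ, |D t ω| ≤ c t)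
    (hcond : ∀ t, μ[D t|𝓕 t] =ᵐ[μ] 0) (T : ℕ) :
    ∫ ω, (∑ t ∈ range T, D t ω) ^ 2 ∂μ ≤ ∑ t ∈ range T, c t ^ 2 := by
  induction T with
  | zero => simp
  | succ T ih =>
    set M : Ω → ℝ := fun ω => ∑ t ∈ range T, D t ω
    have hMmeas : StronglyMeasurable[𝓕 T] M := by
      simpa only [M, ← Finset.sum_apply] using stronglyMeasurable_sum_range hD T
    have hM : Integrable M μ :=
      integrable_finsetSum _ fun t _ => integrable_of_ae_abs_le hD hDc t
    have hMbdd : ∀ᵐ ω ∂μ, ‖M ω‖ ≤ ∑ t ∈ range T, c t := by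
      simpa using ae_abs_sum_range_le hDc T
    have hDT := integrable_of_ae_abs_le hD hDc T
    have hDbdd : ∀ᵐ ω ∂μ, ‖D T ω‖ ≤ c T := by simpa using hDc T
    have hDmeas := ((hD T).mono (𝓕.le _)).aestronglyMeasurable (μ := μ)
    have hMM := hM.bdd_mul (hMmeas.mono (𝓕.le _)).aestronglyMeasurable hMbdd
    have hMD := hDT.bdd_mul (hMmeas.mono (𝓕.le _)).aestronglyMeasurable hMbdd
    have hDD := hDT.bdd_mul hDmeas hDbdd
    have hD2 : ∫ ω, D T ω * D T ω ∂μ ≤ c T ^ 2 := by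
      calc ∫ ω, D T ω * D T ω ∂μ ≤ ∫ _, c T ^ 2 ∂μ := by
            refine integral_mono_ae hDD (integrable_const _) ?_
            filter_upwards [hDc T] with ω hω
            nlinarith [abs_le.1 hω, abs_nonneg (D T ω)]
        _ = c T ^ 2 := by simp
    have hexp : (fun ω => (∑ t ∈ range (T + 1), D t ω) ^ 2) =
        fun ω => M ω * M ω + (2 * (M ω * D T ω) + D T ω * D T ω) := by
      ext ω; simp only [M, sum_range_succ]; ring
    have hrest : Integrable (fun ω => 2 * (M ω * D T ω) + D T ω * D T ω) μ :=
      (hMD.const_mul 2).add hDD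
    rw [hexp, integral_add hMM hrest, integral_add (hMD.const_mul 2) hDD,
      integral_const_mul, integral_mul_eq_zero_of_condExp_eq_zero (𝓕.le T) hMmeas hMD hDT
        (hcond T), sum_range_succ]
    simp only [M, ← sq] at ih hD2 ⊢
    linarith

theorem ae_exists_tendsto_sum_range_of_condExp_eq_zero [IsProbabilityMeasure μ]
    (hD : ∀ t, StronglyMeasurable[𝓕 (t + 1)] (D t)) (hDc : ∀ t, ∀ᵐ ω ∂μ, |D t ω| ≤ c t)
    (hc : Summable fun t => c t ^ 2) (hcond : ∀ t, μ[D t|𝓕 t] =ᵐ[μ] 0) :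
    ∀ᵐ ω ∂μ, ∃ l, Tendsto (fun T => ∑ t ∈ range T, D t ω) atTop (𝓝 l) := by
  have hint : ∀ T, Integrable (∑ t ∈ range T, D t) μ := fun T =>
    integrable_finsetSum' _ fun t _ => integrable_of_ae_abs_le hD hDc t
  have hmart : Martingale (fun T => ∑ t ∈ range T, D t) 𝓕 μ :=
    martingale_of_condExp_sub_eq_zero_nat (stronglyMeasurable_sum_range hD) hint
      fun T => by simpa only [sum_range_succ_sub_sum] using hcond T
  have hbdd : ∀ T, eLpNorm (∑ t ∈ range T, D t) 1 μ ≤ ((1 + ∑' t, c t ^ 2) / 2).toNNReal :=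
    fun T => by
      refine eLpNorm_one_le_of_integral_sq_le (hint T) ?_ ?_
      · have hbound : ∀ᵐ ω ∂μ, ‖(∑ t ∈ range T, D t) ω‖ ≤ ∑ t ∈ range T, c t := by
          simpa only [Finset.sum_apply, Real.norm_eq_abs] using ae_abs_sum_range_le hDc T
        simpa only [← sq] using (hint T).bdd_mul (hint T).aestronglyMeasurable hbound
      · simpa only [Finset.sum_apply] using (integral_sq_sum_range_le hD hDc hcond T).trans
          (hc.sum_le_tsum _ fun t _ => sq_nonneg (c t))
  simpa only [Finset.sum_apply] using hmart.submartingale.exists_ae_tendsto_of_bdd hbdd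

theorem ae_exists_tendsto_sum_mul_sub_condExp [IsProbabilityMeasure μ] {f : ℕ → Ω → ℝ} {R : ℝ}
    (hf : ∀ t, StronglyMeasurable[𝓕 t] (f t)) (hfR : ∀ t ω, |f t ω| ≤ R)
    (hc : Summable fun t => c t ^ 2) :
    ∀ᵐ ω ∂μ, ∃ l, Tendsto
      (fun T => ∑ t ∈ range T, c t * (f (t + 1) ω - μ[f (t + 1)|𝓕 t] ω)) atTop (𝓝 l) := by
  have hint : ∀ t, Integrable (f t) μ := fun t =>
    .of_bound ((hf t).mono (𝓕.le t)).aestronglyMeasurable R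
      (by simpa using Eventually.of_forall (hfR t))
  refine ae_exists_tendsto_sum_range_of_condExp_eq_zero (𝓕 := 𝓕)
    (D := fun t => c t • (f (t + 1) - μ[f (t + 1)|𝓕 t])) (c := fun t => |c t| * (2 * R))
    (fun t => ?_) (fun t => ?_) ?_ (fun t => ?_)
  · exact ((hf (t + 1)).sub (stronglyMeasurable_condExp.mono (𝓕.mono t.le_succ))).const_smul _
  · filter_upwards [ae_bdd_abs_condExp_of_ae_bdd_abs (m := 𝓕 t)
      (Eventually.of_forall (hfR (t + 1)))] with ω hω
    simp only [Pi.smul_apply, Pi.sub_apply, smul_eq_mul, abs_mul]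
    gcongr
    linarith [abs_sub (f (t + 1) ω) (μ[f (t + 1)|𝓕 t] ω), hfR (t + 1) ω]
  · refine (hc.mul_right ((2 * R) ^ 2)).congr fun t => ?_
    rw [mul_pow |c t|, sq_abs]
  · have hcond : μ[μ[f (t + 1)|𝓕 t]|𝓕 t] = μ[f (t + 1)|𝓕 t] :=
      condExp_of_stronglyMeasurable (𝓕.le t) stronglyMeasurable_condExp integrable_condExp
    filter_upwards [condExp_smul (μ := μ) (c t) (f (t + 1) - μ[f (t + 1)|𝓕 t]) (𝓕 t),
      condExp_sub (m := 𝓕 t) (hint (t + 1))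
        (integrable_condExp (μ := μ) (m := 𝓕 t) (f := f (t + 1)))] with ω h1 h2
    rw [h1, Pi.smul_apply, h2, Pi.sub_apply, hcond, sub_self, smul_zero, Pi.zero_apply]

end MartingaleDifferences

section Counting

lemma card_filter_Icc_add_one (f : ℕ → ℕ) (k t : ℕ) :
    #{s ∈ Icc 1 (t + 1) | f s = k} = #{s ∈ Icc 1 t | f s = k} + if f (t + 1) = k then 1 else 0 := by
  rw [← insert_Icc_right_eq_Icc_add_one (by omega), filter_insert]
  split_ifs
  · exact card_insert_of_notMem (by simp)
  · rfl

lemma card_filter_Icc_eq_zero_add_card_filter_Icc_eq_one {f : ℕ → ℕ} (hf : ∀ s, f s = 0 ∨ f s = 1)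
    (t : ℕ) : #{s ∈ Icc 1 t | f s = 0} + #{s ∈ Icc 1 t | f s = 1} = t := by
  have hone : ∀ s ∈ Icc 1 t, f s = 1 ↔ ¬f s = 0 := fun s _ => by
    rcases hf s with h | h <;> simp [h]
  rw [filter_congr hone, card_filter_add_card_filter_not, Nat.card_Icc, Nat.add_sub_cancel]

end Counting

/-- **Example 1, two arms (normal outcomes).** In a two-arm BUD design with
constant parameter `h ≥ 0`, prior variance `σ²` and arm sampling variances
`σ₀², σ₁²`, where the next patient is assigned to arm `0` with conditional
probability `Δ₀(N₀(t))^h / (Δ₀(N₀(t))^h + Δ₁(N₁(t))^h)`, the proportion of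
patients assigned to arm `0` converges almost surely to
`σ₀^{2h/(1+2h)} / (σ₀^{2h/(1+2h)} + σ₁^{2h/(1+2h)})`. -/
theorem stmt_3
    (σ σ₀ σ₁ h : ℝ) (hσ : 0 < σ) (hσ₀ : 0 < σ₀) (hσ₁ : 0 < σ₁) (hh : 0 ≤ h)
    {Ω : Type*} {𝓖 : MeasurableSpace Ω} {μ : Measure Ω} [IsProbabilityMeasure μ]
    (𝓕 : Filtration ℕ 𝓖)
    (A : ℕ → Ω → ℕ) (hA01 : ∀ t ω, A t ω = 0 ∨ A t ω = 1)
    (hA_adapted : ∀ t, Measurable[𝓕 t] (A t))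
    (N : ℕ → ℕ → Ω → ℕ)
    (hN : ∀ a t ω, N a t ω = ((Finset.Icc 1 t).filter (fun s => A s ω = a)).card)
    (h_rand : ∀ t ≥ 1,
      μ[Set.indicator {ω | A (t + 1) ω = 0} (fun _ => (1 : ℝ)) | 𝓕 t]
        =ᵐ[μ] fun ω =>
          budGain σ σ₀ (N 0 t ω) ^ h /
            (budGain σ σ₀ (N 0 t ω) ^ h + budGain σ σ₁ (N 1 t ω) ^ h)) :
    ∀ᵐ ω ∂μ, Tendsto (fun t => (N 0 t ω : ℝ) / t) atTop
      (nhds (σ₀ ^ (2 * h / (1 + 2 * h)) /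
        (σ₀ ^ (2 * h / (1 + 2 * h)) + σ₁ ^ (2 * h / (1 + 2 * h))))) := by
  set ξ : ℕ → Ω → ℝ := fun t => Set.indicator {ω | A t ω = 0} fun _ => 1
  have hξ_meas : ∀ t, StronglyMeasurable[𝓕 t] (ξ t) := fun t =>
    stronglyMeasurable_const.indicator (hA_adapted t (measurableSet_singleton 0))
  have hξ_le : ∀ t ω, |ξ t ω| ≤ 1 := fun t ω => by
    by_cases hA : A t ω = 0 <;> simp [ξ, hA]
  have hN_succ : ∀ t ω, (N 0 (t + 1) ω : ℝ) = N 0 t ω + ξ (t + 1) ω := fun t ω => by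
    by_cases hA : A (t + 1) ω = 0 <;> simp [ξ, hN, card_filter_Icc_add_one (A · ω), hA]
  have hN_add : ∀ t ω, N 0 t ω + N 1 t ω = t := fun t ω => by
    simpa only [hN] using card_filter_Icc_eq_zero_add_card_filter_Icc_eq_one (hA01 · ω) t
  have hsum : Summable fun t : ℕ => (1 / ((t : ℝ) + 1)) ^ 2 := by
    simpa [div_pow] using (summable_nat_add_iff 1).2 (Real.summable_one_div_nat_pow.2 one_lt_two)
  filter_upwards [ae_exists_tendsto_sum_mul_sub_condExp hξ_meas hξ_le hsum,
    ae_all_iff.2 fun t => eventually_imp_distrib_left.2 (h_rand t)] with ω ⟨l, hl⟩ hω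
  show Tendsto _ _ (𝓝 (budLimit σ₀ σ₁ h))
  refine tendsto_of_drift (p := fun t => budProb σ σ₀ σ₁ h (N 0 t ω) (N 1 t ω)) (fun t => ?_)
    (fun t => budProb_mem_Icc _ _ _ _ _ _) ?_ (fun ε hε => ?_) (fun ε hε => ?_) hl.cauchySeq
  · exact ⟨by positivity,
      div_le_one_of_le₀ (by exact_mod_cast Nat.le.intro (hN_add t ω)) t.cast_nonneg⟩
  · filter_upwards [eventually_ge_atTop 1] with t ht
    have ht' : (t : ℝ) ≠ 0 := by positivity
    rw [sum_range_succ_sub_sum, hω t ht, hN_succ]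
    unfold budProb
    push_cast
    field_simp
    ring
  · exact (eventually_budProb_le_budLimit hσ hσ₀ hσ₁ hh hε).mono fun t ht => ht _ _ (hN_add t ω)
  · exact (eventually_budLimit_le_budProb hσ hσ₀ hσ₁ hh hε).mono fun t ht => ht _ _ (hN_add t ω)
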